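/- arXiv:math/0703925 — 3 statements merged into one kernel-verified Lean document; each statement's English description precedes it below -/
import Mathlib

section
/- If p is an odd prime with p ≡ 11 (mod 12), then p does not divide 3^k + 1 for any positive integer k. -/
theorem fermat_conj_1_1 (p : ℕ) (hp : p.Prime) (hodd : Odd p)
    (h : p % 12 = 11) :
    ∀ k : ℕ, 1 ≤ k → ¬ p ∣ 3 ^ k + 1 := by
  intro k hk hdvd
  haveI : Fact p.Prime := ⟨hp⟩
  have hp4 : p % 4 = 3 := by omega
  have hp3 : p % 3 = 2 := by omega
  have hpne3 : p ≠ 3 := by omega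
  -- 3 is a square mod p
  have hsq : IsSquare ((3 : ℕ) : ZMod p) := by
    rw [ZMod.exists_sq_eq_prime_iff_of_mod_four_eq_three hp4 (by norm_num) hpne3]
    intro hs
    rw [← ZMod.natCast_mod, hp3] at hs
    exact absurd hs (by decide)
  have h3ne : ((3 : ℕ) : ZMod p) ≠ 0 := by
    rw [Ne, ZMod.natCast_eq_zero_iff]
    intro hd
    have := (Nat.prime_dvd_prime_iff_eq hp (by norm_num)).mp hd
    exact hpne3 this
  have h1 : ((3 : ℕ) : ZMod p) ^ (p / 2) = 1 :=
    (ZMod.euler_criterion p h3ne).mp hsq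
  have hm : Odd (p / 2) := by
    rcases Nat.odd_iff.mp hodd with h2
    refine Nat.odd_iff.mpr ?_
    omega
  have hk1 : ((3 : ℕ) : ZMod p) ^ k = -1 := by
    have : ((3 ^ k + 1 : ℕ) : ZMod p) = 0 := by
      rw [ZMod.natCast_eq_zero_iff]; exact hdvd
    push_cast at this
    linear_combination this
  have heq : (1 : ZMod p) = -1 := by
    calc (1 : ZMod p) = (((3 : ℕ) : ZMod p) ^ (p / 2)) ^ k := by rw [h1, one_pow]
    _ = (((3 : ℕ) : ZMod p) ^ k) ^ (p / 2) := by rw [← pow_mul, mul_comm, pow_mul]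
    _ = (-1 : ZMod p) ^ (p / 2) := by rw [hk1]
    _ = -1 := hm.neg_one_pow
  haveI : Fact (2 < p) := ⟨by omega⟩
  exact ZMod.neg_one_ne_one heq.symm
end

section
/- There are infinitely many primes p ≡ 1 (mod 8) that divide 2^k + 1 for some positive integer k. -/
open Nat

lemma fermat_prime_div_mod_eight {n p : ℕ} (hn : 3 ≤ n) (hp : p.Prime)
    (hdvd : p ∣ 2 ^ (2 ^ n) + 1) : p % 8 = 1 := by
  have hp2 : p ≠ 2 := by
    rintro rfl
    have : (2 : ℕ) ∣ 2 ^ (2 ^ n) := dvd_pow_self 2 (Nat.pos_of_ne_zero (by positivity)).ne'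
    omega
  haveI : Fact p.Prime := ⟨hp⟩
  have hodd : 2 < p := lt_of_le_of_ne hp.two_le (Ne.symm hp2)
  have h1 : (2 : ZMod p) ^ (2 ^ n) = -1 := by
    have : ((2 ^ (2 ^ n) + 1 : ℕ) : ZMod p) = 0 := (ZMod.natCast_eq_zero_iff _ _).mpr hdvd
    push_cast at this
    linear_combination this
  have hne : (-1 : ZMod p) ≠ 1 := by
    haveI : Fact (2 < p) := ⟨hodd⟩
    exact ZMod.neg_one_ne_one
  have hpow : (2 : ZMod p) ^ (2 ^ (n + 1)) = 1 := by
    rw [pow_succ, pow_mul, h1]; ring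
  have hdvd' : orderOf (2 : ZMod p) ∣ 2 ^ (n + 1) := orderOf_dvd_of_pow_eq_one hpow
  obtain ⟨j, hj, hjo⟩ := (Nat.dvd_prime_pow Nat.prime_two).mp hdvd'
  have hjn : j = n + 1 := by
    by_contra hne'
    have hjle : j ≤ n := by omega
    have : (2 : ZMod p) ^ (2 ^ n) = 1 := by
      apply orderOf_dvd_iff_pow_eq_one.mp
      rw [hjo]
      exact pow_dvd_pow 2 hjle
    rw [h1] at this
    exact hne this
  have hord_dvd : orderOf (2 : ZMod p) ∣ p - 1 := by
    apply orderOf_dvd_of_pow_eq_one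
    apply ZMod.pow_card_sub_one_eq_one
    have : ((2 : ℕ) : ZMod p) ≠ 0 := by
      rw [Ne, ZMod.natCast_eq_zero_iff]
      intro h
      exact hp2 ((Nat.prime_dvd_prime_iff_eq hp Nat.prime_two).mp h)
    simpa using this
  have h16 : 16 ∣ p - 1 := by
    refine dvd_trans ?_ hord_dvd
    rw [hjo, hjn]
    have : (16 : ℕ) = 2 ^ 4 := by norm_num
    rw [this]
    exact pow_dvd_pow 2 (by omega)
  omega

theorem infinitely_many_primes_one_mod_eight_dividing :
    {p : ℕ | p.Prime ∧ p % 8 = 1 ∧ ∃ k : ℕ, 1 ≤ k ∧ p ∣ 2 ^ k + 1}.Infinite := by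
  apply Set.infinite_of_injective_forall_mem
    (f := fun n : ℕ => (Nat.fermatNumber (n + 3)).minFac)
  case hi =>
    intro a b hab
    have ha := Nat.minFac_dvd (Nat.fermatNumber (a + 3))
    have hb := Nat.minFac_dvd (Nat.fermatNumber (b + 3))
    by_contra hne
    have hcop := Nat.coprime_fermatNumber_fermatNumber
      (m := a + 3) (n := b + 3) (by omega)
    have hprime : (Nat.fermatNumber (a + 3)).minFac.Prime :=
      Nat.minFac_prime (Nat.fermatNumber_ne_one _)
    simp only at hab
    have heq : (Nat.fermatNumber (a + 3)).minFac = 1 :=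
      Nat.Coprime.eq_one_of_dvd (Nat.Coprime.coprime_dvd_left ha hcop) (hab ▸ hb)
    exact hprime.one_lt.ne' heq
  case hf =>
    intro n
    have hprime : (Nat.fermatNumber (n + 3)).minFac.Prime :=
      Nat.minFac_prime (Nat.fermatNumber_ne_one _)
    have hdvd : (Nat.fermatNumber (n + 3)).minFac ∣ 2 ^ (2 ^ (n + 3)) + 1 :=
      Nat.minFac_dvd _
    refine ⟨hprime, fermat_prime_div_mod_eight (by omega) hprime hdvd, 2 ^ (n + 3),
      Nat.one_le_two_pow, hdvd⟩
end

section
/- Let a, b, c, d be positive integers with gcd(c,d) = 1, and write a/b = r₀^h with r₀ not a proper power, h = 2^λ h' with h' odd, d = 2^δ d' with d' odd, and γ = v₂(c-1) (with γ = ∞ if c = 1). If λ ≥ γ and δ > γ, then every prime p ≡ c (mod d) with p ∤ ab satisfies p ∤ a^k + b^k for all k ≥ 1. -/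
theorem extremal_density_zero_case (a b c d : ℕ) (ha : 0 < a) (hb : 0 < b)
    (hc : 0 < c) (hd : 0 < d) (hcd : Nat.Coprime c d)
    (r₀ : ℚ) (h h' l δ d' γ : ℕ)
    (hr : (a : ℚ) / b = r₀ ^ h)
    (hr₀ : ¬ ∃ (s : ℚ) (m : ℕ), 1 < m ∧ r₀ = s ^ m)
    (hh : h = 2 ^ l * h') (hh' : Odd h')
    (hdd : d = 2 ^ δ * d') (hd' : Odd d')
    (hc1 : c ≠ 1) (hγ : γ = padicValNat 2 (c - 1))
    (hlγ : γ ≤ l) (hδγ : γ < δ) :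
    ∀ p : ℕ, p.Prime → p % d = c % d → ¬ p ∣ a * b →
      ∀ k : ℕ, 1 ≤ k → ¬ p ∣ a ^ k + b ^ k := by
  intro p hp hpc hpab k hk hpdvd
  haveI : Fact p.Prime := ⟨hp⟩
  haveI : Fact (Nat.Prime 2) := ⟨Nat.prime_two⟩
  -- d is even, hence c is odd, hence p is odd
  have hδ1 : 1 ≤ δ := by omega
  have h2d : 2 ∣ d := by
    rw [hdd]; exact dvd_mul_of_dvd_left (dvd_pow_self 2 (by omega)) d'
  have hcodd : Odd c := by
    rcases Nat.even_or_odd c with hce | hco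
    · exfalso
      have h2c : 2 ∣ c := hce.two_dvd
      have : (2 : ℕ) ∣ Nat.gcd c d := Nat.dvd_gcd h2c h2d
      rw [hcd] at this; omega
    · exact hco
  have hpodd : Odd p := by
    have : p % 2 = c % 2 := by
      calc p % 2 = (p % d) % 2 := (Nat.mod_mod_of_dvd p h2d).symm
        _ = (c % d) % 2 := by rw [hpc]
        _ = c % 2 := Nat.mod_mod_of_dvd c h2d
    rw [Nat.odd_iff] at hcodd ⊢; omega
  have hp2 : 2 < p := by
    have := hp.two_le
    rcases Nat.lt_or_ge 2 p with h' | h'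
    · exact h'
    · exfalso; have : p = 2 := by omega
      rw [this, Nat.odd_iff] at hpodd; omega
  haveI : Fact (2 < p) := ⟨hp2⟩
  have hc2 : 2 ≤ c := by omega
  have hcm1 : c - 1 ≠ 0 := by omega
  -- 2^γ exactly divides c - 1
  have hγdvd : 2 ^ γ ∣ c - 1 := hγ ▸ pow_padicValNat_dvd
  have hγndvd : ¬ 2 ^ (γ + 1) ∣ c - 1 := hγ ▸ pow_succ_padicValNat_not_dvd hcm1
  -- p ≡ c mod 2^(γ+1)
  have hMd : 2 ^ (γ + 1) ∣ d := by
    rw [hdd]; exact dvd_mul_of_dvd_left (pow_dvd_pow 2 (by omega)) d'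
  have hmodM : p % 2 ^ (γ + 1) = c % 2 ^ (γ + 1) := by
    calc p % 2 ^ (γ + 1) = (p % d) % 2 ^ (γ + 1) := (Nat.mod_mod_of_dvd p hMd).symm
      _ = (c % d) % 2 ^ (γ + 1) := by rw [hpc]
      _ = c % 2 ^ (γ + 1) := Nat.mod_mod_of_dvd c hMd
  -- 2^γ exactly divides p - 1
  have hpcZ : ((2 : ℤ) ^ (γ + 1)) ∣ (c : ℤ) - (p : ℤ) := by
    have := (Nat.modEq_iff_dvd (n := 2 ^ (γ + 1)) (a := p) (b := c)).mp hmodM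
    exact_mod_cast this
  have hγdvdZ : ((2 : ℤ) ^ γ) ∣ (c : ℤ) - 1 := by
    have h0 := Int.natCast_dvd_natCast.mpr hγdvd
    push_cast [Nat.cast_sub (by omega : 1 ≤ c)] at h0
    exact_mod_cast h0
  have hγndvdZ : ¬ ((2 : ℤ) ^ (γ + 1)) ∣ (c : ℤ) - 1 := by
    intro hdd'
    apply hγndvd
    have : ((2 : ℕ) ^ (γ + 1) : ℤ) ∣ ((c - 1 : ℕ) : ℤ) := by
      push_cast [Nat.cast_sub (by omega : 1 ≤ c)]
      exact_mod_cast hdd'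
    exact_mod_cast this
  have hpdvdZ : ((2 : ℤ) ^ γ) ∣ (p : ℤ) - 1 := by
    have : (p : ℤ) - 1 = ((c : ℤ) - 1) - ((c : ℤ) - (p : ℤ)) := by ring
    rw [this]
    exact dvd_sub hγdvdZ (dvd_trans (pow_dvd_pow 2 (by omega)) hpcZ)
  have hpndvdZ : ¬ ((2 : ℤ) ^ (γ + 1)) ∣ (p : ℤ) - 1 := by
    intro hdd'
    apply hγndvdZ
    have : (c : ℤ) - 1 = ((p : ℤ) - 1) + ((c : ℤ) - (p : ℤ)) := by ring
    rw [this]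
    exact dvd_add hdd' hpcZ
  have hpdvdN : 2 ^ γ ∣ p - 1 := by
    have : ((2 : ℕ) ^ γ : ℤ) ∣ ((p - 1 : ℕ) : ℤ) := by
      push_cast [Nat.cast_sub (by omega : 1 ≤ p)]
      exact_mod_cast hpdvdZ
    exact_mod_cast this
  obtain ⟨s, hs⟩ := hpdvdN
  have hsodd : Odd s := by
    rcases Nat.even_or_odd s with ⟨t, ht⟩ | hso
    · exfalso
      apply hpndvdZ
      have : (p : ℤ) - 1 = 2 ^ (γ + 1) * t := by
        have h1 : ((p - 1 : ℕ) : ℤ) = (p : ℤ) - 1 := by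
          push_cast [Nat.cast_sub (by omega : 1 ≤ p)]; ring
        have h2 : ((p - 1 : ℕ) : ℤ) = 2 ^ γ * s := by exact_mod_cast congrArg (Nat.cast : ℕ → ℤ) hs
        rw [← h1, h2, ht]; push_cast; ring
      exact ⟨t, this⟩
    · exact hso
  -- p - 1 divides h * s
  have hdvdhs : (p - 1) ∣ h * s := by
    refine ⟨2 ^ (l - γ) * h', ?_⟩
    rw [hh, hs]
    have : 2 ^ l = 2 ^ γ * 2 ^ (l - γ) := by
      rw [← pow_add]; congr 1; omega
    rw [this]; ring
  -- the rational identity as an integer identity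
  have hb0 : (b : ℚ) ≠ 0 := Nat.cast_ne_zero.mpr (by omega)
  have hden0 : ((r₀.den : ℚ)) ≠ 0 := Nat.cast_ne_zero.mpr r₀.den_nz
  have hQ : (a : ℚ) * (r₀.den : ℚ) ^ h = (b : ℚ) * (r₀.num : ℚ) ^ h := by
    have hr' : (a : ℚ) / b = ((r₀.num : ℚ) / (r₀.den : ℚ)) ^ h := by
      rw [Rat.num_div_den r₀]; exact hr
    field_simp at hr'
    rw [hr', div_pow, mul_assoc, div_mul_cancel₀ _ (pow_ne_zero h hden0)]
  have hZ : (a : ℤ) * (r₀.den : ℤ) ^ h = (b : ℤ) * r₀.num ^ h := by exact_mod_cast hQ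
  -- move to ZMod p
  have hZp : (a : ZMod p) * ((r₀.den : ℤ) : ZMod p) ^ h = (b : ZMod p) * ((r₀.num : ℤ) : ZMod p) ^ h := by
    have := congrArg (Int.cast : ℤ → ZMod p) hZ
    push_cast at this ⊢
    exact_mod_cast this
  set A : ZMod p := (a : ZMod p) with hA
  set B : ZMod p := (b : ZMod p) with hB
  set N : ZMod p := ((r₀.num : ℤ) : ZMod p) with hN
  set M : ZMod p := ((r₀.den : ℤ) : ZMod p) with hM
  have hA0 : A ≠ 0 := by
    rw [hA, Ne, ZMod.natCast_eq_zero_iff]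
    intro hpa; exact hpab (Dvd.dvd.mul_right hpa b)
  have hB0 : B ≠ 0 := by
    rw [hB, Ne, ZMod.natCast_eq_zero_iff]
    intro hpb; exact hpab (Dvd.dvd.mul_left hpb a)
  have hhne : h ≠ 0 := by
    intro h0
    rw [h0] at hh
    rcases Nat.mul_eq_zero.mp hh.symm with h1 | h1
    · exact absurd h1 (by positivity)
    · rw [h1, Nat.odd_iff] at hh'; omega
  have hNM : N ≠ 0 ∧ M ≠ 0 := by
    have hcop : Nat.Coprime r₀.num.natAbs r₀.den := r₀.reduced
    constructor
    · intro hN0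
      rw [hN0, zero_pow hhne, mul_zero] at hZp
      have hM0 : M = 0 := by
        rcases mul_eq_zero.mp hZp with h1 | h1
        · exact absurd h1 hA0
        · exact pow_eq_zero_iff hhne |>.mp h1
      -- p divides both num and den
      have hd1 : (p : ℤ) ∣ r₀.num := by
        rwa [hN, ZMod.intCast_zmod_eq_zero_iff_dvd] at hN0
      have hd2 : (p : ℤ) ∣ (r₀.den : ℤ) := by
        rwa [hM, ZMod.intCast_zmod_eq_zero_iff_dvd] at hM0
      have : p ∣ Nat.gcd r₀.num.natAbs r₀.den :=
        Nat.dvd_gcd (Int.natCast_dvd_natCast.mp (by rwa [Int.dvd_natAbs])) (Int.natCast_dvd_natCast.mp (by exact_mod_cast hd2))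
      rw [hcop] at this
      exact absurd (Nat.dvd_one.mp this) (by have := hp.two_le; omega)
    · intro hM0
      rw [hM0, zero_pow hhne, mul_zero] at hZp
      have hN0 : N = 0 := by
        rcases mul_eq_zero.mp hZp.symm with h1 | h1
        · exact absurd h1 hB0
        · exact pow_eq_zero_iff hhne |>.mp h1
      have hd1 : (p : ℤ) ∣ r₀.num := by
        rwa [hN, ZMod.intCast_zmod_eq_zero_iff_dvd] at hN0
      have hd2 : (p : ℤ) ∣ (r₀.den : ℤ) := by
        rwa [hM, ZMod.intCast_zmod_eq_zero_iff_dvd] at hM0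
      have : p ∣ Nat.gcd r₀.num.natAbs r₀.den :=
        Nat.dvd_gcd (Int.natCast_dvd_natCast.mp (by rwa [Int.dvd_natAbs])) (Int.natCast_dvd_natCast.mp (by exact_mod_cast hd2))
      rw [hcop] at this
      exact absurd (Nat.dvd_one.mp this) (by have := hp.two_le; omega)
  obtain ⟨hN0, hM0⟩ := hNM
  -- u = w^h where w = N/M
  set w : ZMod p := N / M with hwdef
  have hw0 : w ≠ 0 := div_ne_zero hN0 hM0
  have hu : A / B = w ^ h := by
    rw [hwdef, div_pow, div_eq_div_iff hB0 (pow_ne_zero h hM0)]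
    linear_combination hZp
  have hw1 : w ^ (p - 1) = 1 := ZMod.pow_card_sub_one_eq_one hw0
  obtain ⟨q, hq⟩ := hdvdhs
  have hus : (A / B) ^ s = 1 := by
    rw [hu, ← pow_mul, hq, pow_mul, hw1, one_pow]
  -- from p ∣ a^k + b^k
  have hzero : A ^ k + B ^ k = 0 := by
    have : ((a ^ k + b ^ k : ℕ) : ZMod p) = 0 :=
      (ZMod.natCast_eq_zero_iff _ _).mpr hpdvd
    push_cast at this
    exact this
  have huk : (A / B) ^ k = -1 := by
    rw [div_pow, div_eq_iff (pow_ne_zero k hB0)]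
    linear_combination hzero
  have : (1 : ZMod p) = -1 := by
    calc (1 : ZMod p) = ((A / B) ^ s) ^ k := by rw [hus, one_pow]
      _ = ((A / B) ^ k) ^ s := by rw [← pow_mul, mul_comm, pow_mul]
      _ = (-1) ^ s := by rw [huk]
      _ = -1 := Odd.neg_one_pow hsodd
  exact ZMod.neg_one_ne_one this.symm
end
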